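/- There exists a constant C₄ = C₄(α,d) > 0 such that for every bounded measurable function F : ℝ^d×ℝ^d → [0,∞), every t > 0 and all x, y ∈ ℝ^d with |x−y| > t^{1/2}, ∫₀^t ∫_{U_{x,y}} η(t−s; x−z)·η(s; w−y)·F(z,w)/|z−w|^{d+α} dz dw ds ≤ C₄·η(t; x−y)·∫₀^t ∫_{U_{x,y}} ( η(s; x−z) + η(s; w−y) )·F(z,w)/|z−w|^{d+α} dz dw ds. -/
import Mathlib


open MeasureTheory Set ENNReal

noncomputable def eta (d : ℕ) (α t : ℝ) (x : EuclideanSpace ℝ (Fin d)) : ℝ :=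
  t / (t ^ ((1 : ℝ) / 2) + ‖x‖) ^ ((d : ℝ) + α)

def Vset (d : ℕ) (x y : EuclideanSpace ℝ (Fin d)) :
    Set (EuclideanSpace ℝ (Fin d) × EuclideanSpace ℝ (Fin d)) :=
  {zw | 4 * min ‖y - zw.2‖ ‖x - zw.1‖ ≤ ‖x - y‖}

def Uset (d : ℕ) (x y : EuclideanSpace ℝ (Fin d)) :
    Set (EuclideanSpace ℝ (Fin d) × EuclideanSpace ℝ (Fin d)) :=
  (Vset d x y)ᶜ

lemma eta_nonneg {d : ℕ} {α t : ℝ} (ht : 0 ≤ t) (x : EuclideanSpace ℝ (Fin d)) :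
    0 ≤ eta d α t x := by
  unfold eta
  exact div_nonneg ht (Real.rpow_nonneg
    (add_nonneg (Real.rpow_nonneg ht _) (norm_nonneg _)) _)

lemma eta_key {d : ℕ} {α : ℝ} (hα1 : 0 < α) {t s : ℝ} (ht : 0 < t)
    (hs0 : 0 < s) (hst : s ≤ t) {x y z : EuclideanSpace ℝ (Fin d)}
    (hxy : t ^ ((1 : ℝ) / 2) < ‖x - y‖) (hxz : ‖x - y‖ < 4 * ‖x - z‖) :
    eta d α (t - s) (x - z) ≤ 8 ^ ((d : ℝ) + α) * eta d α t (x - y) := by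
  have hp : (0 : ℝ) < (d : ℝ) + α := by positivity
  set r : ℝ := ‖x - y‖ with hrdef
  set a : ℝ := ‖x - z‖ with hadef
  have hrt : 0 < t ^ ((1 : ℝ) / 2) := Real.rpow_pos_of_pos ht _
  have hr : 0 < r := hrt.trans hxy
  have ha : 0 < a := by linarith
  have hu : 0 ≤ t - s := by linarith
  have hu12 : 0 ≤ (t - s) ^ ((1 : ℝ) / 2) := Real.rpow_nonneg hu _
  unfold eta
  set A : ℝ := (t ^ ((1 : ℝ) / 2) + r) ^ ((d : ℝ) + α) with hAdef
  set B : ℝ := ((t - s) ^ ((1 : ℝ) / 2) + a) ^ ((d : ℝ) + α) with hBdef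
  have hA : 0 < A := Real.rpow_pos_of_pos (by linarith) _
  have hB : 0 < B := Real.rpow_pos_of_pos (by linarith) _
  rw [← mul_div_assoc, div_le_div_iff₀ hB hA]
  have hAB : A ≤ 8 ^ ((d : ℝ) + α) * B := by
    have h1 : t ^ ((1 : ℝ) / 2) + r ≤ 8 * ((t - s) ^ ((1 : ℝ) / 2) + a) := by linarith
    calc A ≤ (8 * ((t - s) ^ ((1 : ℝ) / 2) + a)) ^ ((d : ℝ) + α) :=
          Real.rpow_le_rpow (by linarith) h1 hp.le
      _ = 8 ^ ((d : ℝ) + α) * B := Real.mul_rpow (by norm_num) (by linarith)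
  calc (t - s) * A ≤ t * (8 ^ ((d : ℝ) + α) * B) :=
        mul_le_mul (by linarith) hAB hA.le ht.le
    _ = 8 ^ ((d : ℝ) + α) * t * B := by ring

/-- generalized 3P inequality for η on U_{x,y}, case |x-y| > √t. -/
theorem stmt6 (d : ℕ) (hd : 2 ≤ d) (α : ℝ) (hα1 : 0 < α) (hα2 : α < 2) :
    ∃ C₄ : ℝ, 0 < C₄ ∧
      ∀ (F : EuclideanSpace ℝ (Fin d) → EuclideanSpace ℝ (Fin d) → ℝ),
        Measurable (Function.uncurry F) → (∀ z w, 0 ≤ F z w) →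
        (∃ B : ℝ, ∀ z w, F z w ≤ B) →
        ∀ t : ℝ, 0 < t → ∀ x y : EuclideanSpace ℝ (Fin d), t ^ ((1 : ℝ) / 2) < ‖x - y‖ →
          (∫⁻ s in Set.Ioc (0 : ℝ) t,
              ∫⁻ zw in Uset d x y,
                ENNReal.ofReal (eta d α (t - s) (x - zw.1) * eta d α s (zw.2 - y) *
                  F zw.1 zw.2 / ‖zw.1 - zw.2‖ ^ ((d : ℝ) + α)))
            ≤ ENNReal.ofReal (C₄ * eta d α t (x - y)) *
                ∫⁻ s in Set.Ioc (0 : ℝ) t,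
                  ∫⁻ zw in Uset d x y,
                    ENNReal.ofReal ((eta d α s (x - zw.1) + eta d α s (zw.2 - y)) *
                      F zw.1 zw.2 / ‖zw.1 - zw.2‖ ^ ((d : ℝ) + α)) := by
  refine ⟨8 ^ ((d : ℝ) + α), Real.rpow_pos_of_pos (by norm_num) _, ?_⟩
  intro F hFm hF0 _hFb t ht x y hxy
  have hC : (0 : ℝ) ≤ 8 ^ ((d : ℝ) + α) := (Real.rpow_pos_of_pos (by norm_num) _).le
  have hη : 0 ≤ eta d α t (x - y) := eta_nonneg ht.le _
  have hU : MeasurableSet (Uset d x y) := by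
    have hV : IsClosed (Vset d x y) := by
      apply isClosed_le _ continuous_const
      fun_prop
    exact hV.measurableSet.compl
  calc (∫⁻ s in Set.Ioc (0 : ℝ) t,
          ∫⁻ zw in Uset d x y,
            ENNReal.ofReal (eta d α (t - s) (x - zw.1) * eta d α s (zw.2 - y) *
              F zw.1 zw.2 / ‖zw.1 - zw.2‖ ^ ((d : ℝ) + α)))
      ≤ ∫⁻ s in Set.Ioc (0 : ℝ) t,
          ∫⁻ zw in Uset d x y,
            ENNReal.ofReal (8 ^ ((d : ℝ) + α) * eta d α t (x - y)) *
              ENNReal.ofReal ((eta d α s (x - zw.1) + eta d α s (zw.2 - y)) *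
                F zw.1 zw.2 / ‖zw.1 - zw.2‖ ^ ((d : ℝ) + α)) := by
        apply setLIntegral_mono' measurableSet_Ioc
        intro s hs
        apply setLIntegral_mono' hU
        intro zw hzw
        obtain ⟨hs0, hst⟩ := hs
        have hzw' : ‖x - y‖ < 4 * min ‖y - zw.2‖ ‖x - zw.1‖ := by
          simpa [Uset, Vset, not_le] using hzw
        have hxz : ‖x - y‖ < 4 * ‖x - zw.1‖ := by
          have := min_le_right ‖y - zw.2‖ ‖x - zw.1‖
          nlinarith
        have key := eta_key hα1 ht hs0 hst hxy hxz
        have hE2 : 0 ≤ eta d α s (zw.2 - y) := eta_nonneg hs0.le _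
        have hEs : 0 ≤ eta d α s (x - zw.1) := eta_nonneg hs0.le _
        have hF : 0 ≤ F zw.1 zw.2 := hF0 _ _
        rw [← ENNReal.ofReal_mul (by positivity)]
        apply ENNReal.ofReal_le_ofReal
        rw [div_eq_mul_inv, mul_div_assoc, div_eq_mul_inv, ← mul_assoc, ← mul_assoc]
        apply mul_le_mul_of_nonneg_right _
          (inv_nonneg.mpr (Real.rpow_nonneg (norm_nonneg _) _))
        have h1 : eta d α (t - s) (x - zw.1) * eta d α s (zw.2 - y) ≤
            8 ^ ((d : ℝ) + α) * eta d α t (x - y) * eta d α s (zw.2 - y) :=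
          mul_le_mul_of_nonneg_right key hE2
        nlinarith [mul_nonneg (mul_nonneg (mul_nonneg hC hη) hEs) hF,
          mul_le_mul_of_nonneg_right h1 hF]
    _ = ENNReal.ofReal (8 ^ ((d : ℝ) + α) * eta d α t (x - y)) *
          ∫⁻ s in Set.Ioc (0 : ℝ) t,
            ∫⁻ zw in Uset d x y,
              ENNReal.ofReal ((eta d α s (x - zw.1) + eta d α s (zw.2 - y)) *
                F zw.1 zw.2 / ‖zw.1 - zw.2‖ ^ ((d : ℝ) + α)) := by
        simp_rw [lintegral_const_mul' _ _ ENNReal.ofReal_ne_top]
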